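/- Let X, K, Y, potential outcomes Y(k) satisfy consistency Y = Y(K) and conditional exchangeability Y(k) ⟂ K | X, with X, 𝒦 finite. Let ν_k(x) = E[Y(k) | X = x] be the true outcome regression and let μ̂ : 𝒦 × 𝒳 → ℝ be an arbitrary function with μ̂(k, x) ≠ 0 everywhere. Then for any policy π : 𝒳 → 𝒦, E[ ν_{π(X)}(X) + (Y − ν_K(X)) · 1{K = π(X)} / μ̂(K, X) ] = E[ Y(π(X)) ]. -/

import Mathlib

open Classical in
/-- Probability of an event under a probability mass function on a finite space. -/
noncomputable def Prb {Ω : Type*} [Fintype Ω] (p : Ω → ℝ) (A : Ω → Prop) : ℝ :=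
  ∑ ω, if A ω then p ω else 0

/-- Expectation under a probability mass function on a finite space. -/
noncomputable def ExV {Ω : Type*} [Fintype Ω] (p : Ω → ℝ) (f : Ω → ℝ) : ℝ :=
  ∑ ω, p ω * f ω

open Classical in
/-- Conditional expectation of `f` given the event `A`. -/
noncomputable def CExp {Ω : Type*} [Fintype Ω] (p : Ω → ℝ) (f : Ω → ℝ) (A : Ω → Prop) : ℝ :=
  (∑ ω, if A ω then p ω * f ω else 0) / Prb p A

/-!
Split both expectations over the fibres `X = x`. On a fibre of positive probability, `ν k x` is
the mean of `Ypot k`, and exchangeability makes it also the mean of `Ypot k` on the sub-event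
`K = k'`. Hence on every fibre the augmentation term has mean zero, whatever the constant weight
`1 / μhat (π x) x` it carries there, while the regression term has the same mean as
`Ypot (π x)`. Null fibres contribute nothing to either side.
-/

open Finset

section ExOn

variable {Ω : Type*} [Fintype Ω] {p : Ω → ℝ}

lemma prb_nonneg (hp : ∀ ω, 0 ≤ p ω) (A : Ω → Prop) : 0 ≤ Prb p A :=
  sum_nonneg fun ω _ => by split_ifs <;> simp [hp ω]

lemma prb_eq_sum_filter (A : Ω → Prop) [DecidablePred A] :
    Prb p A = ∑ ω ∈ univ.filter A, p ω := by
  rw [Prb, sum_filter]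
  congr!

open Classical in
/-- `E[f; A] = E[f 𝟙_A]`, the numerator of `CExp p f A`. -/
noncomputable def ExOn (p : Ω → ℝ) (f : Ω → ℝ) (A : Ω → Prop) : ℝ :=
  ∑ ω, if A ω then p ω * f ω else 0

lemma exOn_eq_sum_filter (f : Ω → ℝ) (A : Ω → Prop) [DecidablePred A] :
    ExOn p f A = ∑ ω ∈ univ.filter A, p ω * f ω := by
  rw [ExOn, sum_filter]
  congr!

lemma cExp_eq_exOn_div (f : Ω → ℝ) (A : Ω → Prop) : CExp p f A = ExOn p f A / Prb p A := rfl

lemma exOn_const (c : ℝ) (A : Ω → Prop) : ExOn p (fun _ => c) A = c * Prb p A := by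
  simp only [ExOn, Prb, mul_sum, mul_ite, mul_zero, mul_comm]

lemma exOn_congr {f g : Ω → ℝ} {A : Ω → Prop} (h : ∀ ω, A ω → f ω = g ω) :
    ExOn p f A = ExOn p g A :=
  sum_congr rfl fun ω _ => by split_ifs with hω <;> simp [h ω, hω]

lemma exOn_sub (f g : Ω → ℝ) (A : Ω → Prop) :
    ExOn p (fun ω => f ω - g ω) A = ExOn p f A - ExOn p g A := by
  simp only [ExOn, ← sum_sub_distrib]
  exact sum_congr rfl fun ω _ => by split_ifs <;> ring

lemma exOn_div_const (f : Ω → ℝ) (c : ℝ) (A : Ω → Prop) :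
    ExOn p (fun ω => f ω / c) A = ExOn p f A / c := by
  simp only [ExOn, sum_div]
  exact sum_congr rfl fun ω _ => by split_ifs <;> ring

lemma exOn_ite (f : Ω → ℝ) (A B : Ω → Prop) [DecidablePred B] :
    ExOn p (fun ω => if B ω then f ω else 0) A = ExOn p f (fun ω => B ω ∧ A ω) :=
  sum_congr rfl fun ω _ => by by_cases hB : B ω <;> by_cases hA : A ω <;> simp [hA, hB]

lemma exOn_eq_zero_of_prb_eq_zero (hp : ∀ ω, 0 ≤ p ω) {A B : Ω → Prop} (hA : Prb p A = 0)
    (hBA : ∀ ω, B ω → A ω) (f : Ω → ℝ) : ExOn p f B = 0 := by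
  classical
  have hzero : ∀ ω, A ω → p ω = 0 := by
    rw [prb_eq_sum_filter, sum_eq_zero_iff_of_nonneg fun ω _ => hp ω] at hA
    exact fun ω hω => hA ω (mem_filter.2 ⟨mem_univ ω, hω⟩)
  exact sum_eq_zero fun ω _ => ite_eq_right_iff.2 fun hω => by rw [hzero ω (hBA ω hω), zero_mul]

lemma prb_eq_zero_of_imp (hp : ∀ ω, 0 ≤ p ω) {A B : Ω → Prop} (hA : Prb p A = 0)
    (hBA : ∀ ω, B ω → A ω) : Prb p B = 0 := by
  simpa using (exOn_const (p := p) 1 B).symm.trans (exOn_eq_zero_of_prb_eq_zero hp hA hBA _)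

lemma exOn_eq_sum_image_mul_prb (f : Ω → ℝ) (A : Ω → Prop) :
    ExOn p f A = ∑ t ∈ univ.image f, t * Prb p (fun ω => f ω = t ∧ A ω) := by
  classical
  rw [exOn_eq_sum_filter, ← sum_fiberwise_of_maps_to fun ω _ => mem_image_of_mem f (mem_univ ω)]
  refine sum_congr rfl fun t _ => ?_
  rw [prb_eq_sum_filter, filter_filter, mul_sum]
  exact sum_congr (filter_congr fun ω _ => and_comm) fun ω hω => by
    rw [(mem_filter.1 hω).2.1, mul_comm]

lemma exOn_mul_eq_of_prb_level_mul {f : Ω → ℝ} {A B : Ω → Prop} {a b : ℝ}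
    (h : ∀ t, Prb p (fun ω => f ω = t ∧ A ω) * a = Prb p (fun ω => f ω = t ∧ B ω) * b) :
    ExOn p f A * a = ExOn p f B * b := by
  classical
  simp only [exOn_eq_sum_image_mul_prb f, sum_mul, mul_assoc, h]

lemma mul_prb_eq_exOn_of_cExp (hp : ∀ ω, 0 ≤ p ω) {f : Ω → ℝ} {A : Ω → Prop} {c : ℝ}
    (hc : 0 < Prb p A → c = CExp p f A) : c * Prb p A = ExOn p f A := by
  rcases (prb_nonneg hp A).eq_or_lt with h0 | hpos
  · rw [← h0, mul_zero, exOn_eq_zero_of_prb_eq_zero hp h0.symm (fun _ => id)]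
  · rw [hc hpos, cExp_eq_exOn_div, div_mul_cancel₀ _ hpos.ne']

lemma exOn_and_eq_mul_prb_of_condIndep (hp : ∀ ω, 0 ≤ p ω) {f : Ω → ℝ} {A B : Ω → Prop}
    {c : ℝ} (hindep : ∀ t, Prb p (fun ω => f ω = t ∧ B ω ∧ A ω) * Prb p A
      = Prb p (fun ω => f ω = t ∧ A ω) * Prb p (fun ω => B ω ∧ A ω))
    (hc : c * Prb p A = ExOn p f A) :
    ExOn p f (fun ω => B ω ∧ A ω) = c * Prb p (fun ω => B ω ∧ A ω) := by
  have hBA : ∀ ω, B ω ∧ A ω → A ω := fun _ => And.right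
  by_cases h0 : Prb p A = 0
  · rw [exOn_eq_zero_of_prb_eq_zero hp h0 hBA, prb_eq_zero_of_imp hp h0 hBA, mul_zero]
  · refine mul_right_cancel₀ h0 ?_
    rw [exOn_mul_eq_of_prb_level_mul hindep, ← hc]
    ring

lemma sum_exOn_fiber {𝒳 : Type*} [Fintype 𝒳] (f : Ω → ℝ) (X : Ω → 𝒳) :
    ∑ x, ExOn p f (fun ω => X ω = x) = ExV p f := by
  classical
  simp only [exOn_eq_sum_filter]
  exact sum_fiberwise univ X _

lemma exV_add (f g : Ω → ℝ) : ExV p (fun ω => f ω + g ω) = ExV p f + ExV p g := by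
  simp only [ExV, mul_add, sum_add_distrib]

end ExOn

section Regression

variable {Ω 𝒳 𝒦 : Type*} [Fintype Ω] [Fintype 𝒳] {p : Ω → ℝ} {X : Ω → 𝒳} {K : Ω → 𝒦}
  {Ypot : 𝒦 → Ω → ℝ} {ν : 𝒦 → 𝒳 → ℝ}

lemma exV_regression_comp_policy (hp : ∀ ω, 0 ≤ p ω)
    (hν : ∀ (k : 𝒦) (x : 𝒳), 0 < Prb p (fun ω => X ω = x) →
      ν k x = CExp p (fun ω => Ypot k ω) (fun ω => X ω = x))
    (π : 𝒳 → 𝒦) :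
    ExV p (fun ω => ν (π (X ω)) (X ω)) = ExV p (fun ω => Ypot (π (X ω)) ω) := by
  rw [← sum_exOn_fiber _ X, ← sum_exOn_fiber _ X]
  refine sum_congr rfl fun x _ => ?_
  calc ExOn p (fun ω => ν (π (X ω)) (X ω)) (fun ω => X ω = x)
      = ExOn p (fun _ => ν (π x) x) (fun ω => X ω = x) := exOn_congr fun ω hω => by rw [hω]
    _ = ExOn p (Ypot (π x)) (fun ω => X ω = x) := by
      rw [exOn_const, mul_prb_eq_exOn_of_cExp hp (hν (π x) x)]
    _ = ExOn p (fun ω => Ypot (π (X ω)) ω) (fun ω => X ω = x) :=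
      exOn_congr fun ω hω => by rw [hω]

open Classical in
lemma exV_augmentation_eq_zero (hp : ∀ ω, 0 ≤ p ω) {Y : Ω → ℝ}
    (hcons : ∀ ω, Y ω = Ypot (K ω) ω)
    (hexch : ∀ (k k' : 𝒦) (x : 𝒳) (t : ℝ),
      Prb p (fun ω => Ypot k ω = t ∧ K ω = k' ∧ X ω = x) * Prb p (fun ω => X ω = x)
        = Prb p (fun ω => Ypot k ω = t ∧ X ω = x) * Prb p (fun ω => K ω = k' ∧ X ω = x))
    (hν : ∀ (k : 𝒦) (x : 𝒳), 0 < Prb p (fun ω => X ω = x) →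
      ν k x = CExp p (fun ω => Ypot k ω) (fun ω => X ω = x))
    (μhat : 𝒦 → 𝒳 → ℝ) (π : 𝒳 → 𝒦) :
    ExV p (fun ω => (Y ω - ν (K ω) (X ω)) * (if K ω = π (X ω) then (1:ℝ) else 0)
      / μhat (K ω) (X ω)) = 0 := by
  rw [← sum_exOn_fiber _ X]
  refine sum_eq_zero fun x _ => ?_
  calc ExOn p (fun ω => (Y ω - ν (K ω) (X ω)) * (if K ω = π (X ω) then (1:ℝ) else 0)
        / μhat (K ω) (X ω)) (fun ω => X ω = x)
      = ExOn p (fun ω => if K ω = π x then (Ypot (π x) ω - ν (π x) x) / μhat (π x) x else 0)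
          (fun ω => X ω = x) := exOn_congr fun ω hω => by
        subst hω
        split_ifs with hk
        · rw [hcons, hk, mul_one]
        · rw [mul_zero, zero_div]
    _ = (ExOn p (Ypot (π x)) (fun ω => K ω = π x ∧ X ω = x)
          - ν (π x) x * Prb p (fun ω => K ω = π x ∧ X ω = x)) / μhat (π x) x := by
      rw [exOn_ite, exOn_div_const, exOn_sub, exOn_const]
    _ = 0 := by
      rw [exOn_and_eq_mul_prb_of_condIndep hp (hexch (π x) (π x) x)
        (mul_prb_eq_exOn_of_cExp hp (hν (π x) x)), sub_self, zero_div]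

end Regression

open Classical in
theorem doubly_robust_true_regression_general {Ω 𝒳 𝒦 : Type*} [Fintype Ω] [Fintype 𝒳]
    (p : Ω → ℝ) (hp : ∀ ω, 0 ≤ p ω)
    (X : Ω → 𝒳) (K : Ω → 𝒦) (Ypot : 𝒦 → Ω → ℝ) (Y : Ω → ℝ)
    (hcons : ∀ ω, Y ω = Ypot (K ω) ω)
    (hexch : ∀ (k k' : 𝒦) (x : 𝒳) (t : ℝ),
      Prb p (fun ω => Ypot k ω = t ∧ K ω = k' ∧ X ω = x) * Prb p (fun ω => X ω = x)
        = Prb p (fun ω => Ypot k ω = t ∧ X ω = x) * Prb p (fun ω => K ω = k' ∧ X ω = x))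
    (ν : 𝒦 → 𝒳 → ℝ)
    (hν : ∀ (k : 𝒦) (x : 𝒳), 0 < Prb p (fun ω => X ω = x) →
      ν k x = CExp p (fun ω => Ypot k ω) (fun ω => X ω = x))
    (μhat : 𝒦 → 𝒳 → ℝ)
    (π : 𝒳 → 𝒦) :
    ExV p (fun ω => ν (π (X ω)) (X ω)
        + (Y ω - ν (K ω) (X ω)) * (if K ω = π (X ω) then (1:ℝ) else 0) / μhat (K ω) (X ω))
      = ExV p (fun ω => Ypot (π (X ω)) ω) := by
  rw [exV_add, exV_augmentation_eq_zero hp hcons hexch hν μhat π, add_zero]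
  exact exV_regression_comp_policy hp hν π

open Classical in
/-- Doubly robust identity with the true outcome regression: for any propensity model
`μ̂` that never vanishes, `E[ν_{π(X)}(X) + (Y − ν_K(X)) 𝟙{K = π(X)} / μ̂(K, X)] = E[Y(π(X))]`,
where `ν_k(x) = E[Y(k) | X = x]`. -/
theorem doubly_robust_true_regression {Ω 𝒳 𝒦 : Type*} [Fintype Ω] [Fintype 𝒳] [Fintype 𝒦]
    (p : Ω → ℝ) (hp : ∀ ω, 0 ≤ p ω) (hp1 : ∑ ω, p ω = 1)
    (X : Ω → 𝒳) (K : Ω → 𝒦) (Ypot : 𝒦 → Ω → ℝ) (Y : Ω → ℝ)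
    (hcons : ∀ ω, Y ω = Ypot (K ω) ω)
    (hexch : ∀ (k k' : 𝒦) (x : 𝒳) (t : ℝ),
      Prb p (fun ω => Ypot k ω = t ∧ K ω = k' ∧ X ω = x) * Prb p (fun ω => X ω = x)
        = Prb p (fun ω => Ypot k ω = t ∧ X ω = x) * Prb p (fun ω => K ω = k' ∧ X ω = x))
    (ν : 𝒦 → 𝒳 → ℝ)
    (hν : ∀ (k : 𝒦) (x : 𝒳), 0 < Prb p (fun ω => X ω = x) →
      ν k x = CExp p (fun ω => Ypot k ω) (fun ω => X ω = x))
    (μhat : 𝒦 → 𝒳 → ℝ) (hμhat : ∀ (k : 𝒦) (x : 𝒳), μhat k x ≠ 0)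
    (π : 𝒳 → 𝒦) :
    ExV p (fun ω => ν (π (X ω)) (X ω)
        + (Y ω - ν (K ω) (X ω)) * (if K ω = π (X ω) then (1:ℝ) else 0) / μhat (K ω) (X ω))
      = ExV p (fun ω => Ypot (π (X ω)) ω) :=
  doubly_robust_true_regression_general p hp X K Ypot Y hcons hexch ν hν μhat π
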